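/- Let ρ be an n×n density matrix with projection P onto its range. Then the modified trace distance of coherence D_coh(ρ) := min{‖ρ − X‖_tr : X positive semidefinite diagonal} equals 1 if and only if Pⱼⱼ ≤ 1/2 for all 1 ≤ j ≤ n. -/

import Mathlib

/-!
Write `P` for the range projection of `ρ`. If every `P_jj ≤ 1/2`, the symmetry `M = 2P - 1`
satisfies `-1 ≤ M ≤ 1` and `ρ M = ρ`, so for every diagonal `X ≥ 0`
`‖ρ - X‖₁ ≥ Re tr((ρ - X) M) = 1 - ∑ₖ Xₖₖ (2 Pₖₖ - 1) ≥ 1`, while `X = 0` gives `1`.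

If `p = P_jj > 1/2`, take `X = t Eⱼⱼ` with `t > 0` small. Splitting `Eⱼⱼ` along `P` and
`Q = 1 - P` as `E ≤ (1 + a) PEP + (1 + a⁻¹) QEQ`, and using `PEP ≤ p P`, gives
`t Eⱼⱼ ≤ ε P + B` with `B = 2pt · Q Eⱼⱼ Q ≥ 0`, where `ε P ≤ ρ` because `ρ` is bounded below by
its least positive eigenvalue on its range. So `ρ - X + B ≥ 0`, and the bound
`‖A‖₁ ≤ tr A + 2 tr B` for `B ≥ 0`, `A + B ≥ 0` yields
`‖ρ - X‖₁ ≤ 1 - t + 4p(1 - p)t = 1 - t(2p - 1)² < 1`.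
-/

open Matrix BigOperators

/-- The trace norm of a complex square matrix: the sum of its singular values. -/
noncomputable def traceNorm {m : Type*} [Fintype m] [DecidableEq m] (A : Matrix m m ℂ) : ℝ :=
  ∑ i, Real.sqrt ((Matrix.isHermitian_conjTranspose_mul_self A).eigenvalues i)

/-- The operator norm of a complex square matrix: its largest singular value. -/
noncomputable def opNorm {m : Type*} [Fintype m] [DecidableEq m] (A : Matrix m m ℂ) : ℝ :=
  ⨆ i, Real.sqrt ((Matrix.isHermitian_conjTranspose_mul_self A).eigenvalues i)

/-- The orthogonal projection onto the strictly positive eigenspace of a Hermitian matrix. -/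
noncomputable def posProj {n : ℕ} {H : Matrix (Fin n) (Fin n) ℂ} (hH : H.IsHermitian) :
    Matrix (Fin n) (Fin n) ℂ :=
  (hH.eigenvectorUnitary : Matrix (Fin n) (Fin n) ℂ) *
    Matrix.diagonal (fun i => if 0 < hH.eigenvalues i then (1 : ℂ) else 0) *
    (star (hH.eigenvectorUnitary : Matrix (Fin n) (Fin n) ℂ))

/-- The orthogonal projection onto the strictly negative eigenspace of a Hermitian matrix. -/
noncomputable def negProj {n : ℕ} {H : Matrix (Fin n) (Fin n) ℂ} (hH : H.IsHermitian) :
    Matrix (Fin n) (Fin n) ℂ :=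
  (hH.eigenvectorUnitary : Matrix (Fin n) (Fin n) ℂ) *
    Matrix.diagonal (fun i => if hH.eigenvalues i < 0 then (1 : ℂ) else 0) *
    (star (hH.eigenvectorUnitary : Matrix (Fin n) (Fin n) ℂ))

/-- The orthogonal projection onto the range of a Hermitian matrix. -/
noncomputable def rangeProj {n : ℕ} {H : Matrix (Fin n) (Fin n) ℂ} (hH : H.IsHermitian) :
    Matrix (Fin n) (Fin n) ℂ :=
  (hH.eigenvectorUnitary : Matrix (Fin n) (Fin n) ℂ) *
    Matrix.diagonal (fun i => if hH.eigenvalues i ≠ 0 then (1 : ℂ) else 0) *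
    (star (hH.eigenvectorUnitary : Matrix (Fin n) (Fin n) ℂ))

/-- `A` is Birkhoff–James orthogonal to `B` in the trace norm. -/
noncomputable def BJOrth {m : Type*} [Fintype m] [DecidableEq m] (A B : Matrix m m ℂ) : Prop :=
  ∀ l : ℝ, traceNorm A ≤ traceNorm (A + (l : ℂ) • B)

/-- The principal submatrix of `A` indexed by the finite set `s`. -/
def principalSub {n : ℕ} (A : Matrix (Fin n) (Fin n) ℂ) (s : Finset (Fin n)) :
    Matrix {i // i ∈ s} {i // i ∈ s} ℂ :=
  A.submatrix (fun i => (i : Fin n)) (fun i => (i : Fin n))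

open scoped ComplexOrder


open scoped MatrixOrder

section StarOrderedAlgebra

variable {R : Type*} [Ring R] [StarRing R] [PartialOrder R] [StarOrderedRing R] [Algebra ℝ R]
  [StarModule ℝ R] [PosSMulMono ℝ R]

lemma le_smul_mul_mul_add_smul_mul_mul {E P Q : R} (hE : 0 ≤ E) (hP : IsSelfAdjoint P)
    (hQ : IsSelfAdjoint Q) (hPQ : P + Q = 1) {a b : ℝ} (hb : 0 ≤ b) (hab : a * b = 1) :
    E ≤ (1 + a) • (P * E * P) + (1 + b) • (Q * E * Q) := by
  have hsq : 0 ≤ b • ((a • P - Q) * E * (a • P - Q)) :=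
    smul_nonneg hb (((IsSelfAdjoint.all a).smul hP).sub hQ |>.conjugate_nonneg hE)
  have hE' : E = (P + Q) * E * (P + Q) := by rw [hPQ, one_mul, mul_one]
  rw [← sub_nonneg]
  convert hsq using 1
  nth_rw 3 [hE']
  simp only [add_mul, mul_add, sub_mul, mul_sub, smul_mul_assoc, mul_smul_comm, smul_sub, smul_smul]
  linear_combination (norm := module) (-a * hab) • (P * E * P) + hab • (P * E * Q + Q * E * P)

lemma le_smul_one_of_mul_self_eq_smul {T : R} (hT : IsSelfAdjoint T) {c : ℝ} (hc : 0 < c)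
    (hTT : T * T = c • T) : T ≤ c • 1 := by
  have hsq : (c • 1 - T) * (c • 1 - T) = c • (c • 1 - T) := by
    simp only [sub_mul, mul_sub, smul_mul_assoc, mul_smul_comm, one_mul, mul_one, hTT, smul_sub]
    module
  have hS : IsSelfAdjoint (c • 1 - T) := ((IsSelfAdjoint.all c).smul (.one R)).sub hT
  rw [← sub_nonneg, ← inv_smul_smul₀ hc.ne' (c • 1 - T), ← hsq]
  exact smul_nonneg (inv_nonneg.2 hc.le) hS.mul_self_nonneg

end StarOrderedAlgebra

namespace Matrix

lemma single_nonneg {m : Type*} [DecidableEq m] (j : m) {c : ℂ} (hc : 0 ≤ c) :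
    0 ≤ single j j c := by
  rw [← diagonal_single]
  exact (PosSemidef.diagonal fun i ↦ by by_cases h : i = j <;> simp [h, hc]).nonneg

section TraceNorm

variable {m : Type*} [Fintype m] [DecidableEq m]

lemma IsHermitian.trace_cfc {A : Matrix m m ℂ} (hA : A.IsHermitian) (f : ℝ → ℝ) :
    (cfc f A).trace = ∑ i, (f (hA.eigenvalues i) : ℂ) := by
  rw [hA.cfc_eq, IsHermitian.cfc, Unitary.conjStarAlgAut_apply, trace_mul_cycle,
    Unitary.coe_star_mul_self, one_mul, trace_diagonal]
  rfl

lemma traceNorm_eq_re_trace_abs (A : Matrix m m ℂ) : traceNorm A = (CFC.abs A).trace.re := by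
  have hB : 0 ≤ star A * A := star_mul_self_nonneg A
  rw [CFC.abs, CFC.sqrt_eq_real_sqrt _ hB, cfcₙ_eq_cfc, star_eq_conjTranspose,
    (isHermitian_conjTranspose_mul_self A).trace_cfc]
  simp [traceNorm]

lemma traceNorm_nonneg (A : Matrix m m ℂ) : 0 ≤ traceNorm A :=
  Finset.sum_nonneg fun _ _ ↦ Real.sqrt_nonneg _

lemma traceNorm_of_nonneg {A : Matrix m m ℂ} (hA : 0 ≤ A) : traceNorm A = A.trace.re := by
  rw [traceNorm_eq_re_trace_abs, CFC.abs_of_nonneg A hA]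

lemma trace_mul_nonneg {A B : Matrix m m ℂ} (hA : 0 ≤ A) (hB : 0 ≤ B) : 0 ≤ (A * B).trace := by
  set S := CFC.sqrt A
  have hS : Sᴴ = S := (CFC.sqrt_nonneg A).isSelfAdjoint
  calc 0 ≤ (Sᴴ * B * S).trace := (hB.posSemidef.conjTranspose_mul_mul_same S).trace_nonneg
    _ = (A * B).trace := by rw [hS, trace_mul_cycle, CFC.sqrt_mul_sqrt_self A hA]

lemma abs_re_trace_mul_le {A S : Matrix m m ℂ} (hA : 0 ≤ A) (hS₁ : -1 ≤ S) (hS₂ : S ≤ 1) :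
    |(A * S).trace.re| ≤ A.trace.re := by
  have h₁ := Complex.nonneg_iff.1 (trace_mul_nonneg hA (sub_nonneg.2 hS₂))
  have h₂ := Complex.nonneg_iff.1 (trace_mul_nonneg hA (neg_le_iff_add_nonneg.1 hS₁))
  simp only [mul_sub, mul_add, mul_one, trace_sub, trace_add, Complex.sub_re, Complex.add_re]
    at h₁ h₂
  exact abs_le.2 ⟨by linarith [h₂.1], by linarith [h₁.1]⟩

lemma re_trace_mul_le_traceNorm {A S : Matrix m m ℂ} (hA : IsSelfAdjoint A) (hS₁ : -1 ≤ S)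
    (hS₂ : S ≤ 1) : (A * S).trace.re ≤ traceNorm A := by
  have hpos : 0 ≤ CFC.abs A + A := by
    rw [CFC.abs_add_self A hA]; exact nsmul_nonneg (CFC.posPart_nonneg A) 2
  have hneg : 0 ≤ CFC.abs A - A := by
    rw [CFC.abs_sub_self A hA]; exact nsmul_nonneg (CFC.negPart_nonneg A) 2
  have hP := abs_le.1 (abs_re_trace_mul_le hpos hS₁ hS₂)
  have hN := abs_le.1 (abs_re_trace_mul_le hneg hS₁ hS₂)
  simp only [add_mul, sub_mul, trace_add, trace_sub, Complex.add_re, Complex.sub_re] at hP hN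
  rw [traceNorm_eq_re_trace_abs]
  linarith [hP.2, hN.1]

lemma exists_traceNorm_eq_re_trace_mul {A : Matrix m m ℂ} (hA : IsSelfAdjoint A) :
    ∃ S : Matrix m m ℂ, -1 ≤ S ∧ S ≤ 1 ∧ traceNorm A = (A * S).trace.re := by
  set sgn : ℝ → ℝ := fun x ↦ if 0 ≤ x then 1 else -1
  have hcont : ContinuousOn sgn (spectrum ℝ A) := finite_real_spectrum.continuousOn _
  refine ⟨cfc sgn A, ?_, cfc_le_one _ _ fun x _ ↦ ?_, ?_⟩
  · simpa using algebraMap_le_cfc sgn (-1) A fun x _ ↦ by simp only [sgn]; split_ifs <;> norm_num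
  · simp only [sgn]; split_ifs <;> norm_num
  · have : A * cfc sgn A = cfc (‖·‖) A :=
      calc A * cfc sgn A = cfc (fun x ↦ x * sgn x) A := by
            rw [cfc_mul (fun x ↦ x) sgn A, cfc_id' ℝ A]
        _ = cfc (‖·‖) A := cfc_congr fun x _ ↦ by
            simp only [sgn, Real.norm_eq_abs]
            split_ifs with h
            · simp [abs_of_nonneg h]
            · simp [abs_of_neg (not_le.1 h)]
    rw [traceNorm_eq_re_trace_abs, this, CFC.abs_eq_cfc_norm A hA]

lemma traceNorm_le_of_add_nonneg {A B : Matrix m m ℂ} (hA : IsSelfAdjoint A) (hB : 0 ≤ B)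
    (hAB : 0 ≤ A + B) : traceNorm A ≤ A.trace.re + 2 * B.trace.re := by
  obtain ⟨S, hS₁, hS₂, hAS⟩ := exists_traceNorm_eq_re_trace_mul hA
  have h₁ := abs_le.1 (abs_re_trace_mul_le hAB hS₁ hS₂)
  have h₂ := abs_le.1 (abs_re_trace_mul_le hB hS₁ hS₂)
  simp only [add_mul, trace_add, Complex.add_re] at h₁
  linarith [h₁.2, h₂.1]

lemma IsStarProjection.mul_single_mul_le {P : Matrix m m ℂ} (hP : IsStarProjection P) {j : m}
    (hj : 0 < (P j j).re) : P * single j j 1 * P ≤ (P j j).re • P := by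
  have hPP : P * P = P := hP.isIdempotentElem.eq
  have hPs : star P = P := hP.isSelfAdjoint.star_eq
  have hPjj : ((P j j).re : ℂ) = P j j := hP.isSelfAdjoint.isHermitian.coe_re_apply_self j
  have hEPE : single j j 1 * P * single j j 1 = (P j j).re • single j j (1 : ℂ) := by
    rw [single_mul_mul_single, smul_single, Complex.real_smul, hPjj]
    simp
  have hT : IsSelfAdjoint (P * single j j 1 * P) := by
    simpa [hPs] using (single_nonneg j zero_le_one).isSelfAdjoint.conjugate P
  have hTT : (P * single j j 1 * P) * (P * single j j 1 * P) =
      (P j j).re • (P * single j j 1 * P) := by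
    calc _ = P * (single j j 1 * (P * P) * single j j 1) * P := by simp only [mul_assoc]
      _ = _ := by rw [hPP, hEPE, mul_smul_comm, smul_mul_assoc]
  calc P * single j j 1 * P = P * (P * single j j 1 * P) * star P := by
        rw [hPs, ← mul_assoc, ← mul_assoc, hPP, mul_assoc (P * _) P P, hPP]
    _ ≤ P * ((P j j).re • 1) * star P :=
        star_right_conjugate_le_conjugate (le_smul_one_of_mul_self_eq_smul hT hj hTT) P
    _ = (P j j).re • P := by rw [hPs, mul_smul_comm, mul_one, smul_mul_assoc, hPP]

lemma re_trace_le_traceNorm_sub {ρ P X : Matrix m m ℂ} (hρ : IsSelfAdjoint ρ)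
    (hP : IsStarProjection P) (hρP : ρ * P = ρ) (hX : X.IsDiag) (hX₀ : 0 ≤ X)
    (hPdiag : ∀ j, (P j j).re ≤ 1 / 2) : ρ.trace.re ≤ traceNorm (ρ - X) := by
  set M : Matrix m m ℂ := (2 : ℝ) • P - 1
  have hM₁ : -1 ≤ M := by
    simpa [M] using smul_nonneg zero_le_two hP.nonneg
  have hM₂ : M ≤ 1 := by
    have h : (1 : Matrix m m ℂ) - M = (2 : ℝ) • (1 - P) := by
      simp only [M, smul_sub, two_smul]
      abel
    rw [← sub_nonneg, h]
    exact smul_nonneg zero_le_two hP.one_sub_nonneg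
  have hρM : ρ * M = ρ := by
    rw [mul_sub, mul_smul_comm, hρP, mul_one, two_smul, add_sub_cancel_right]
  have hXM : (X * M).trace.re ≤ 0 := by
    rw [← hX.diagonal_diag, trace, Complex.re_sum]
    refine Finset.sum_nonpos fun k _ ↦ ?_
    obtain ⟨hre, him⟩ := Complex.nonneg_iff.1 (hX₀.posSemidef.diag_nonneg (i := k))
    have := hPdiag k
    simp [M, ← him]
    nlinarith
  have key := re_trace_mul_le_traceNorm (hρ.sub hX₀.isSelfAdjoint) hM₁ hM₂
  rw [sub_mul, trace_sub, Complex.sub_re, hρM] at key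
  linarith

lemma exists_traceNorm_sub_lt {ρ P : Matrix m m ℂ} (hρ : IsSelfAdjoint ρ)
    (hP : IsStarProjection P) {ε : ℝ} (hε : 0 < ε) (hερ : ε • P ≤ ρ) {j : m}
    (hj : 1 / 2 < (P j j).re) :
    ∃ X : Matrix m m ℂ, X.IsDiag ∧ 0 ≤ X ∧ traceNorm (ρ - X) < ρ.trace.re := by
  set p := (P j j).re
  have hp₀ : 0 < p := by linarith
  have hp : 0 < 2 * p - 1 := by linarith
  set E : Matrix m m ℂ := single j j 1
  have hE₀ : 0 ≤ E := single_nonneg j zero_le_one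
  set Q : Matrix m m ℂ := 1 - P
  have hQ : IsStarProjection Q := hP.one_sub
  -- chosen so that `t * (1 + (2p - 1)⁻¹) * p = ε`
  set t := ε * (2 * p - 1) / (2 * p ^ 2)
  have ht : 0 < t := by positivity
  set B : Matrix m m ℂ := (2 * p * t) • (Q * E * Q)
  have hB : 0 ≤ B := smul_nonneg (by positivity) (hQ.isSelfAdjoint.conjugate_nonneg hE₀)
  have hE := le_smul_mul_mul_add_smul_mul_mul hE₀ hP.isSelfAdjoint hQ.isSelfAdjoint
    (add_sub_cancel P 1) hp.le (inv_mul_cancel₀ hp.ne')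
  have hle : t • E ≤ ε • P + B :=
    calc t • E ≤ t • ((1 + (2 * p - 1)⁻¹) • (P * E * P) + (1 + (2 * p - 1)) • (Q * E * Q)) := by
          gcongr
      _ ≤ t • ((1 + (2 * p - 1)⁻¹) • (p • P) + (1 + (2 * p - 1)) • (Q * E * Q)) := by
          gcongr
          exact hP.mul_single_mul_le hp₀
      _ = ε • P + B := by
          rw [smul_add, smul_smul, smul_smul, smul_smul]
          congr 2
          · simp only [t]
            field_simp
            ring
          · ring
  have hsum : 0 ≤ (ρ - t • E) + B := by
    have h : (ρ - t • E) + B = (ρ - ε • P) + (ε • P + B - t • E) := by abel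
    rw [h]
    exact add_nonneg (sub_nonneg.2 hερ) (sub_nonneg.2 hle)
  have hbound := traceNorm_le_of_add_nonneg
    (hρ.sub (smul_nonneg ht.le hE₀).isSelfAdjoint) hB hsum
  have htrE : (t • E).trace.re = t := by simp [E]
  have htrB : B.trace.re = 2 * p * t * (1 - p) := by
    rw [trace_smul, trace_mul_cycle, hQ.isIdempotentElem.eq, trace_mul_comm, trace_single_mul]
    simp [Q, p]
  refine ⟨t • E, ?_, smul_nonneg ht.le hE₀, ?_⟩
  · rw [show E = diagonal (Pi.single j 1) from (diagonal_single j 1).symm]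
    exact (isDiag_diagonal _).smul t
  · rw [trace_sub, Complex.sub_re, htrE, htrB] at hbound
    nlinarith [mul_pos ht (mul_pos hp hp)]

end TraceNorm

section RangeProj

variable {n : ℕ} {H : Matrix (Fin n) (Fin n) ℂ}

lemma rangeProj_eq_cfc (hH : H.IsHermitian) :
    rangeProj hH = cfc (fun x : ℝ ↦ if x ≠ 0 then 1 else 0) H := by
  rw [hH.cfc_eq, IsHermitian.cfc, Unitary.conjStarAlgAut_apply, rangeProj]
  congr 3 with i
  split_ifs <;> simp_all

lemma isStarProjection_rangeProj (hH : H.IsHermitian) : IsStarProjection (rangeProj hH) := by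
  rw [rangeProj_eq_cfc]
  refine ⟨?_, cfc_predicate _ H⟩
  rw [IsIdempotentElem, ← cfc_mul _ _ H (finite_real_spectrum.continuousOn _)
    (finite_real_spectrum.continuousOn _)]
  congr with x
  split_ifs <;> simp

lemma mul_rangeProj (hH : H.IsHermitian) : H * rangeProj hH = H := by
  rw [rangeProj_eq_cfc]
  nth_rw 1 [← cfc_id' ℝ H]
  rw [← cfc_mul _ _ H (finite_real_spectrum.continuousOn _) (finite_real_spectrum.continuousOn _)]
  conv_rhs => rw [← cfc_id' ℝ H]
  congr with x
  split_ifs with h <;> simp_all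

lemma exists_pos_smul_rangeProj_le (hH : H.PosSemidef) : ∃ ε > (0 : ℝ), ε • rangeProj hH.1 ≤ H := by
  have hev : ∀ᶠ ε in nhdsWithin (0 : ℝ) (Set.Ioi 0),
      0 < ε ∧ ∀ i, hH.1.eigenvalues i ≠ 0 → ε ≤ hH.1.eigenvalues i := by
    refine eventually_mem_nhdsWithin.and (Filter.eventually_all.2 fun i ↦ ?_)
    by_cases hi : hH.1.eigenvalues i = 0
    · exact .of_forall fun _ h ↦ absurd hi h
    · exact nhdsWithin_le_nhds <| (eventually_le_nhds
        (lt_of_le_of_ne (hH.eigenvalues_nonneg i) (Ne.symm hi))).mono fun _ h _ ↦ h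
  obtain ⟨ε, hε, hεle⟩ := hev.exists
  refine ⟨ε, hε, ?_⟩
  have hc (f : ℝ → ℝ) : ContinuousOn f (spectrum ℝ H) := finite_real_spectrum.continuousOn f
  rw [rangeProj_eq_cfc, ← sub_nonneg, ← cfc_const_mul _ _ _ (hc _)]
  nth_rw 1 [← cfc_id' ℝ H]
  rw [← cfc_sub _ _ _ (hc _) (hc _)]
  refine cfc_nonneg fun x hx ↦ ?_
  obtain ⟨i, rfl⟩ := hH.1.spectrum_real_eq_range_eigenvalues ▸ hx
  have hi := hH.eigenvalues_nonneg i
  split_ifs with h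
  · linarith [hεle i h]
  · simpa using hi

end RangeProj

end Matrix

theorem stmt_16 {n : ℕ} (ρ : Matrix (Fin n) (Fin n) ℂ)
    (hρ : ρ.PosSemidef) (hρtr : ρ.trace = 1) :
    sInf {r : ℝ | ∃ X : Matrix (Fin n) (Fin n) ℂ, X.IsDiag ∧ X.PosSemidef ∧
        r = traceNorm (ρ - X)} = 1 ↔
      ∀ j : Fin n, ((rangeProj hρ.1) j j).re ≤ 1 / 2 := by
  set S := {r : ℝ | ∃ X : Matrix (Fin n) (Fin n) ℂ, X.IsDiag ∧ X.PosSemidef ∧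
    r = traceNorm (ρ - X)}
  have hρ₀ : 0 ≤ ρ := hρ.nonneg
  have hρtr' : ρ.trace.re = 1 := by simp [hρtr]
  have hS : 1 ∈ S := ⟨0, isDiag_zero, .zero, by rw [sub_zero, traceNorm_of_nonneg hρ₀, hρtr']⟩
  have hbdd : BddBelow S := ⟨0, by rintro _ ⟨X, -, -, rfl⟩; exact traceNorm_nonneg _⟩
  have hP := isStarProjection_rangeProj hρ.1
  constructor
  · intro hinf j
    by_contra! hj
    obtain ⟨ε, hε, hερ⟩ := exists_pos_smul_rangeProj_le hρ
    obtain ⟨X, hXd, hX₀, hlt⟩ := exists_traceNorm_sub_lt hρ₀.isSelfAdjoint hP hε hερ hj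
    have := hinf ▸ csInf_le hbdd ⟨X, hXd, hX₀.posSemidef, rfl⟩
    linarith
  · intro hdiag
    refine IsLeast.csInf_eq ⟨hS, ?_⟩
    rintro _ ⟨X, hXd, hX₀, rfl⟩
    simpa [hρtr'] using re_trace_le_traceNorm_sub hρ₀.isSelfAdjoint hP (mul_rangeProj hρ.1) hXd
      hX₀.nonneg hdiag
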